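/- arXiv:math/0212210 — 3 statements merged into one kernel-verified Lean document; each statement's English description precedes it below -/
import Mathlib

section
/- Let n ∈ ℕ and p ∈ ℕ with 2p < n. At any point (u₁,…,u_p,ψ₁,…,ψ_p) with ψ_α ≠ 0, u_α ∉ Γ for all α and u_α − u_β ∉ Γ for all α ≠ β, the 2p × 2p antisymmetric matrix of pairwise brackets of the coordinate functions, with entries {u_α,u_β} = 0, {u_α,ψ_β} = ψ_β (α ≠ β), {u_α,ψ_α} = −((n−2)/2)ψ_α, {ψ_α,u_β} = −{u_β,ψ_α}, and {ψ_α,ψ_β} = n(ζ(u_α−u_β) − ζ(u_α) + ζ(u_β))ψ_αψ_β (α ≠ β), is invertible; i.e. the Poisson structure defined by formulas (3) is nondegenerate on this open set when 2p < n. -/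
noncomputable section

/-- The lattice `Γ = ℤω₁ + ℤω₂ ⊂ ℂ`. -/
def lat (ω₁ ω₂ : ℂ) : Set ℂ := {z | ∃ a b : ℤ, z = (a : ℂ) * ω₁ + (b : ℂ) * ω₂}

/-- `Γ' = Γ \ {0}`. -/
def latp (ω₁ ω₂ : ℂ) : Set ℂ := {z | z ∈ lat ω₁ ω₂ ∧ z ≠ 0}

/-- The Weierstrass `℘`-function of the lattice `Γ`. -/
def wp (ω₁ ω₂ : ℂ) (z : ℂ) : ℂ :=
  1 / z ^ 2 + ∑' w : latp ω₁ ω₂, (1 / (z - (w : ℂ)) ^ 2 - 1 / (w : ℂ) ^ 2)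

/-- The Weierstrass `ζ`-function of the lattice `Γ`. -/
def wz (ω₁ ω₂ : ℂ) (z : ℂ) : ℂ :=
  1 / z + ∑' w : latp ω₁ ω₂, (1 / (z - (w : ℂ)) + 1 / (w : ℂ) + z / (w : ℂ) ^ 2)


/-- The `2p × 2p` antisymmetric matrix of pairwise brackets of the coordinate functions
`(u₁,…,u_p,ψ₁,…,ψ_p)` given by formulas (3). -/
def Mbv (ω₁ ω₂ : ℂ) (n : ℕ) {p : ℕ} (u ψ : Fin p → ℂ) :
    Matrix (Fin p ⊕ Fin p) (Fin p ⊕ Fin p) ℂ :=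
  Matrix.of fun i j =>
    match i, j with
    | .inl _, .inl _ => 0
    | .inl α, .inr β => (if α = β then -(((n : ℂ) - 2) / 2) else 1) * ψ β
    | .inr α, .inl β => -((if β = α then -(((n : ℂ) - 2) / 2) else 1) * ψ α)
    | .inr α, .inr β =>
        if α = β then 0 else
          (n : ℂ) * (wz ω₁ ω₂ (u α - u β) - wz ω₁ ω₂ (u α) + wz ω₁ ω₂ (u β)) * ψ α * ψ β

/-! Order the coordinates as `(u, ψ)`. Since `{u_α, u_β} = 0` and `{ψ_α, u_β} = -{u_β, ψ_α}`, the
bracket matrix has the block form `[[0, B], [-Bᵀ, D]]` with `B = (J - (n/2) I) · diag ψ`, `J` the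
all-ones matrix, and such a matrix is invertible as soon as `B` is, whatever `D` (the `ζ`-terms) is.
As `J` has rank one with eigenvalue `p`, `det (J - (n/2) I) = (-n/2)^(p-1) (p - n/2)`, which is
nonzero because `n ≠ 0` and `n ≠ 2p`. -/

namespace Matrix

variable {ι R : Type*} [Fintype ι] [DecidableEq ι] [CommRing R]

theorem isUnit_fromBlocks_zero₁₁ {B C D : Matrix ι ι R} :
    IsUnit (fromBlocks 0 B C D) ↔ IsUnit B ∧ IsUnit C := by
  rw [← isUnit_submatrix_equiv (Equiv.sumComm ι ι) (Equiv.refl _), Equiv.coe_refl,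
    Equiv.sumComm_apply, fromBlocks_submatrix_sum_swap_left, submatrix_id_id,
    isUnit_fromBlocks_zero₂₁, and_comm]

theorem isUnit_smul_one_add_of_const_one {K : Type*} [Field K] {a : K} (ha : a ≠ 0)
    (hcard : a + Fintype.card ι ≠ 0) :
    IsUnit (a • (1 : Matrix ι ι K) + of fun _ _ => 1) := by
  have hrank_one : (a • 1 + of fun _ _ => 1 : Matrix ι ι K) =
      a • (1 + replicateCol Unit (fun _ : ι => a⁻¹) * replicateRow Unit (fun _ : ι => (1 : K))) := by
    ext i j
    simp [mul_apply, mul_add, ha]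
  rw [isUnit_iff_isUnit_det, hrank_one, det_smul, det_one_add_replicateCol_mul_replicateRow]
  have hrank_one_det :
      1 + (fun _ => (1 : K)) ⬝ᵥ (fun _ : ι => a⁻¹) = (a + Fintype.card ι) / a := by
    simp only [dotProduct, one_mul, Finset.sum_const, Finset.card_univ, nsmul_eq_mul]
    field_simp
  rw [hrank_one_det]
  exact ((isUnit_iff_ne_zero.mpr ha).pow _).mul (isUnit_iff_ne_zero.mpr (div_ne_zero hcard ha))

end Matrix

open Matrix

section Mbv

variable (ω₁ ω₂ : ℂ) (n : ℕ) {p : ℕ} (u ψ : Fin p → ℂ)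

theorem Mbv_toBlocks₁₁ : (Mbv ω₁ ω₂ n u ψ).toBlocks₁₁ = 0 := rfl

theorem Mbv_toBlocks₁₂ :
    (Mbv ω₁ ω₂ n u ψ).toBlocks₁₂ = (-((n : ℂ) / 2) • 1 + of fun _ _ => 1) * diagonal ψ := by
  ext α β
  by_cases h : α = β
  · subst h; simp [Mbv, toBlocks₁₂]; ring
  · simp [Mbv, toBlocks₁₂, h]

theorem Mbv_toBlocks₂₁ : (Mbv ω₁ ω₂ n u ψ).toBlocks₂₁ = -(Mbv ω₁ ω₂ n u ψ).toBlocks₁₂ᵀ := rfl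

end Mbv

theorem stmt10_general (ω₁ ω₂ : ℂ) (n p : ℕ) (hpn : 2 * p < n) (u ψ : Fin p → ℂ)
    (hψ : ∀ α, ψ α ≠ 0) :
    IsUnit (Mbv ω₁ ω₂ n u ψ) := by
  have hn : -((n : ℂ) / 2) ≠ 0 := by
    have hn0 : (n : ℂ) ≠ 0 := by exact_mod_cast (Nat.zero_lt_of_lt hpn).ne'
    simpa using hn0
  have hnp : -((n : ℂ) / 2) + Fintype.card (Fin p) ≠ 0 := by
    rw [Fintype.card_fin]
    intro h
    have hn2p : (n : ℂ) = (2 * p : ℕ) := by push_cast; linear_combination -2 * h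
    exact hpn.ne' (Nat.cast_injective hn2p)
  rw [← fromBlocks_toBlocks (Mbv ω₁ ω₂ n u ψ), Mbv_toBlocks₁₁, Mbv_toBlocks₂₁,
    isUnit_fromBlocks_zero₁₁, IsUnit.neg_iff, isUnit_transpose, and_self, Mbv_toBlocks₁₂]
  exact (isUnit_smul_one_add_of_const_one hn hnp).mul
    (isUnit_diagonal.mpr (Pi.isUnit_iff.mpr fun α => (hψ α).isUnit))

/-- If `2p < n`, the Poisson structure (3) is nondegenerate on the open set
`{ψ_α ≠ 0, u_α ∉ Γ, u_α − u_β ∉ Γ}`: the matrix of pairwise brackets is invertible. -/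
theorem stmt10 (ω₁ ω₂ : ℂ) (hΓ : LinearIndependent ℝ ![ω₁, ω₂])
    (n p : ℕ) (hpn : 2 * p < n) (u ψ : Fin p → ℂ)
    (hψ : ∀ α, ψ α ≠ 0) (hu : ∀ α, u α ∉ lat ω₁ ω₂)
    (huu : ∀ α β, α ≠ β → u α - u β ∉ lat ω₁ ω₂) :
    IsUnit (Mbv ω₁ ω₂ n u ψ) :=
  stmt10_general ω₁ ω₂ n p hpn u ψ hψ
end
end

section
/- Let n, p ∈ ℕ, p ≥ 1, and let f be a symmetric function of p+1 complex variables lying in S^{p+1}𝓕_n, i.e. a finite ℂ-linear combination of symmetrizations of products f₁(z₁)⋯f_{p+1}(z_{p+1}) with f₁,…,f_{p+1} ∈ 𝓕_n. Define X_p(f)(u₁,…,u_p,ψ₁,…,ψ_p) = Σ_{(α₁,…,α_{p+1}) ∈ {1,…,p}^{p+1}} f(u_{α₁},…,u_{α_{p+1}}) ψ_{α₁}⋯ψ_{α_{p+1}} (the values of f at points with repeated coordinates being those of its holomorphic extension). Then X_p(f) vanishes identically (for all u_j ∉ Γ with u_j − u_k ∉ Γ, j ≠ k, and all ψ) if and only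 if f(z₁,…,z_{p+1}) = 0 at every point where z_j − z_k ∈ Γ for some j ≠ k. -/
/-!
If `X_p(f)` vanishes at pairwise incongruent points `u₁, …, u_p ∉ Γ`, it is the zero polynomial
in `ψ`; since `f` is symmetric, its coefficient at `∏ⱼ ψ_{a j}` is a positive multiple of
`f(u ∘ a)`, so `f` vanishes at every `u ∘ a`. A point `z` with two coordinates congruent modulo `Γ`
meets at most `p` classes of `ℂ/Γ`; as `ℂ/Γ` is infinite these extend to `p` pairwise incongruent
classes off `Γ`, whose representatives `u` give `z ≡ u ∘ a` coordinatewise, hence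
`f z = f (u ∘ a) = 0` by ellipticity. Conversely every `a : Fin (p+1) → Fin p` repeats a value,
so each term of `X_p(f)` vanishes.
-/

noncomputable section

/-- `f ∈ 𝓕_n`: a meromorphic `Γ`-elliptic function, holomorphic on `ℂ ∖ Γ`, whose poles
at the points of `Γ` have order at most `n`. -/
def MemFn (ω₁ ω₂ : ℂ) (n : ℕ) (f : ℂ → ℂ) : Prop :=
  (∀ z ∉ lat ω₁ ω₂, ∀ w ∈ lat ω₁ ω₂, f (z + w) = f z) ∧
  (∀ z ∉ lat ω₁ ω₂, DifferentiableAt ℂ f z) ∧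
  (∀ γ ∈ lat ω₁ ω₂, ∃ g : ℂ → ℂ, AnalyticAt ℂ g γ ∧
    ∀ᶠ z in nhdsWithin γ {γ}ᶜ, g z = (z - γ) ^ n * f z)

open MvPolynomial Function

section Polynomial

variable {R : Type*} [CommRing R] {ι κ : Type*} [Fintype ι]

theorem exists_perm_comp_eq_of_sum_single_eq {a b : ι → κ}
    (h : ∑ j, Finsupp.single (a j) 1 = ∑ j, Finsupp.single (b j) 1) :
    ∃ σ : Equiv.Perm ι, b ∘ σ = a := by
  classical
  have hfiber : ∀ α, Fintype.card {j // a j = α} = Fintype.card {j // b j = α} := by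
    intro α
    have hα := DFunLike.congr_fun h α
    simp only [Finsupp.finsetSum_apply, Finsupp.single_apply, Finset.sum_boole] at hα
    simpa [Fintype.card_subtype, eq_comm] using hα
  exact ⟨Equiv.ofFiberEquiv fun α => Fintype.equivOfCardEq (hfiber α),
    funext (Equiv.ofFiberEquiv_map _)⟩

theorem prod_X_eq_monomial_sum_single (a : ι → κ) :
    (∏ j, X (a j) : MvPolynomial κ R) = monomial (∑ j, Finsupp.single (a j) 1) 1 := by
  simp only [monomial_sum_one, X]

/-- The coefficient of the monomial `∏ⱼ X (a₀ j)` is `F a₀` times the size of the orbit of `a₀`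
under `Equiv.Perm ι`. -/
theorem eq_zero_of_forall_sum_mul_prod_eq_zero [IsDomain R] [CharZero R] [DecidableEq ι]
    [Fintype κ] {F : (ι → κ) → R} (hF : ∀ a (σ : Equiv.Perm ι), F (a ∘ σ) = F a)
    (h : ∀ ψ : κ → R, ∑ a, F a * ∏ j, ψ (a j) = 0) (a₀ : ι → κ) : F a₀ = 0 := by
  classical
  let d : (ι → κ) → κ →₀ ℕ := fun a => ∑ j, Finsupp.single (a j) 1
  have hP : (∑ a, C (F a) * ∏ j, X (a j) : MvPolynomial κ R) = 0 :=
    MvPolynomial.funext fun ψ => by simpa using h ψ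
  have horbit : ∀ a, d a = d a₀ → F a = F a₀ := fun a had => by
    obtain ⟨σ, rfl⟩ := exists_perm_comp_eq_of_sum_single_eq had
    exact hF a₀ σ
  have hcoeff := congrArg (coeff (d a₀)) hP
  simp only [prod_X_eq_monomial_sum_single, C_mul_monomial, mul_one, coeff_sum, coeff_monomial,
    coeff_zero, ← Finset.sum_filter] at hcoeff
  rw [Finset.sum_congr rfl fun a ha => horbit a (Finset.mem_filter.mp ha).2,
    Finset.sum_const, smul_eq_zero] at hcoeff
  refine hcoeff.resolve_left fun hcard => ?_
  exact Finset.card_ne_zero.mpr ⟨a₀, by simp⟩ hcard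

end Polynomial

theorem exists_injective_comp_eq_of_card_image_le {ι Q : Type*} [Fintype ι] [DecidableEq Q]
    [Infinite Q] (w : ι → Q) {x₀ : Q} (hx₀ : ∀ i, w i ≠ x₀) {p : ℕ}
    (hp : (Finset.univ.image w).card ≤ p) :
    ∃ (v : Fin p → Q) (a : ι → Fin p), Injective v ∧ (∀ α, v α ≠ x₀) ∧ v ∘ a = w := by
  obtain ⟨t, hwt, ht⟩ := Infinite.exists_superset_card_eq (insert x₀ (Finset.univ.image w))
    (p + 1) ((Finset.card_insert_le _ _).trans (Nat.succ_le_succ hp))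
  have hx₀t : x₀ ∈ t := hwt (Finset.mem_insert_self _ _)
  have hw : ∀ i, w i ∈ t.erase x₀ := fun i =>
    Finset.mem_erase.mpr ⟨hx₀ i, hwt (Finset.mem_insert_of_mem (Finset.mem_image_of_mem w
      (Finset.mem_univ i)))⟩
  let e : t.erase x₀ ≃ Fin p :=
    Finset.equivFinOfCardEq (by rw [Finset.card_erase_of_mem hx₀t, ht]; rfl)
  refine ⟨fun α => e.symm α, fun i => e ⟨w i, hw i⟩, ?_, fun α => ?_, ?_⟩
  · exact Subtype.val_injective.comp e.symm.injective
  · exact (Finset.mem_erase.mp (e.symm α).2).1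
  · funext i
    simp

theorem exists_incongruent_reps {G : Type*} [AddCommGroup G] (L : AddSubgroup G)
    [Infinite (G ⧸ L)] {ι : Type*} [Fintype ι] {p : ℕ} (hι : Fintype.card ι ≤ p + 1)
    (z : ι → G) (hz : ∀ i, z i ∉ L) (hcong : ∃ j k, j ≠ k ∧ z j - z k ∈ L) :
    ∃ (u : Fin p → G) (a : ι → Fin p), (∀ α, u α ∉ L) ∧
      (∀ α β, α ≠ β → u α - u β ∉ L) ∧ ∀ i, z i - u (a i) ∈ L := by
  classical
  let w : ι → G ⧸ L := fun i => z i
  have hw : ∀ i, w i ≠ 0 := fun i => by simpa [w, QuotientAddGroup.eq_zero_iff] using hz i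
  have hcard : (Finset.univ.image w).card ≤ p := by
    obtain ⟨j, k, hjk, hjk'⟩ := hcong
    have hne : (Finset.univ.image w).card ≠ Finset.univ.card := fun himage =>
      hjk (Finset.card_image_iff.mp himage (Finset.mem_univ j) (Finset.mem_univ k)
        (QuotientAddGroup.eq_iff_sub_mem.mpr hjk'))
    have := Finset.card_image_le (s := Finset.univ) (f := w)
    rw [Finset.card_univ] at this hne
    omega
  obtain ⟨v, a, hv, hv0, hva⟩ := exists_injective_comp_eq_of_card_image_le w hw hcard
  choose u hu using fun α => QuotientAddGroup.mk_surjective (v α)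
  refine ⟨u, a, fun α huα => hv0 α ?_, fun α β hαβ huαβ => hαβ (hv ?_), fun i => ?_⟩
  · rw [← hu, QuotientAddGroup.eq_zero_iff]
    exact huα
  · rw [← hu, ← hu]
    exact QuotientAddGroup.eq_iff_sub_mem.mpr huαβ
  · rw [← QuotientAddGroup.eq_iff_sub_mem, hu]
    exact (congrFun hva i).symm

def latAddSubgroup (ω₁ ω₂ : ℂ) : AddSubgroup ℂ where
  carrier := lat ω₁ ω₂
  zero_mem' := ⟨0, 0, by simp⟩
  add_mem' := by
    rintro _ _ ⟨a, b, rfl⟩ ⟨a', b', rfl⟩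
    exact ⟨a + a', b + b', by push_cast; ring⟩
  neg_mem' := by
    rintro _ ⟨a, b, rfl⟩
    exact ⟨-a, -b, by push_cast; ring⟩

@[simp]
theorem mem_latAddSubgroup {ω₁ ω₂ z : ℂ} : z ∈ latAddSubgroup ω₁ ω₂ ↔ z ∈ lat ω₁ ω₂ := Iff.rfl

theorem lat_countable (ω₁ ω₂ : ℂ) : (lat ω₁ ω₂).Countable :=
  (Set.countable_range fun q : ℤ × ℤ => (q.1 : ℂ) * ω₁ + (q.2 : ℂ) * ω₂).mono <| by
    rintro _ ⟨a, b, rfl⟩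
    exact ⟨(a, b), rfl⟩

instance (ω₁ ω₂ : ℂ) : Infinite (ℂ ⧸ latAddSubgroup ω₁ ω₂) := by
  refine not_finite_iff_infinite.mp fun _ => not_countable_complex ?_
  have : Countable (latAddSubgroup ω₁ ω₂) := (lat_countable ω₁ ω₂).to_subtype
  exact Set.countable_univ_iff.mpr
    (Countable.of_equiv _
      (AddSubgroup.addGroupEquivQuotientProdAddSubgroup (s := latAddSubgroup ω₁ ω₂)).symm)

theorem stmt11_general (ω₁ ω₂ : ℂ)
    (n p : ℕ)
    (N : ℕ) (c : Fin N → ℂ) (Ff : Fin N → Fin (p + 1) → ℂ → ℂ)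
    (hFf : ∀ i j, MemFn ω₁ ω₂ n (Ff i j))
    (f : (Fin (p + 1) → ℂ) → ℂ)
    (hf : ∀ z : Fin (p + 1) → ℂ, (∀ j, z j ∉ lat ω₁ ω₂) →
      f z = ∑ i, c i * ((1 / (Nat.factorial (p + 1) : ℂ)) *
        ∑ σ : Equiv.Perm (Fin (p + 1)), ∏ j, Ff i j (z (σ j)))) :
    (∀ u ψ : Fin p → ℂ, (∀ α, u α ∉ lat ω₁ ω₂) →
        (∀ α β, α ≠ β → u α - u β ∉ lat ω₁ ω₂) →
        ∑ a : Fin (p + 1) → Fin p, f (fun j => u (a j)) * ∏ j, ψ (a j) = 0)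
    ↔ (∀ z : Fin (p + 1) → ℂ, (∀ j, z j ∉ lat ω₁ ω₂) →
        (∃ j k, j ≠ k ∧ z j - z k ∈ lat ω₁ ω₂) → f z = 0) := by
  have hsymm : ∀ w : Fin (p + 1) → ℂ, (∀ j, w j ∉ lat ω₁ ω₂) →
      ∀ τ : Equiv.Perm (Fin (p + 1)), f (w ∘ τ) = f w := fun w hw τ => by
    rw [hf w hw, hf (w ∘ τ) fun j => hw (τ j)]
    refine Finset.sum_congr rfl fun i _ => ?_
    congr 2
    exact Equiv.sum_comp (Equiv.mulLeft τ) fun σ => ∏ j, Ff i j (w (σ j))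
  have hper : ∀ w γ : Fin (p + 1) → ℂ, (∀ j, w j ∉ lat ω₁ ω₂) → (∀ j, γ j ∈ lat ω₁ ω₂) →
      f (w + γ) = f w := fun w γ hw hγ => by
    have hwγ : ∀ j, w j + γ j ∉ lat ω₁ ω₂ := fun j h => hw j <| by
      simpa using (latAddSubgroup ω₁ ω₂).sub_mem (mem_latAddSubgroup.mpr h) (hγ j)
    rw [hf w hw, hf (w + γ) hwγ]
    simp only [Pi.add_apply, (hFf _ _).1 _ (hw _) _ (hγ _)]
  constructor
  · intro H z hz hcong
    obtain ⟨u, a, hu, hu_inj, hzu⟩ :=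
      exists_incongruent_reps (latAddSubgroup ω₁ ω₂) (p := p) (by simp) z hz hcong
    have hua : f (u ∘ a) = 0 :=
      eq_zero_of_forall_sum_mul_prod_eq_zero (F := fun b => f (u ∘ b))
        (fun b σ => hsymm (u ∘ b) (fun j => hu _) σ) (H u · hu hu_inj) a
    rw [← hua, ← hper (u ∘ a) (z - u ∘ a) (fun j => hu _) hzu, add_sub_cancel]
  · intro H u ψ hu _
    refine Finset.sum_eq_zero fun a _ => ?_
    obtain ⟨j, k, hjk, hajk⟩ := Fintype.exists_ne_map_eq_of_card_lt a (by simp)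
    have hcong : u (a j) - u (a k) ∈ lat ω₁ ω₂ := by
      rw [hajk, sub_self]
      exact (latAddSubgroup ω₁ ω₂).zero_mem
    rw [H _ (fun j => hu (a j)) ⟨j, k, hjk, hcong⟩, zero_mul]

/-- Characterization of `ker x_p ∩ S^{p+1}𝓕_n`: for a symmetric function
`f ∈ S^{p+1}𝓕_n` (a linear combination of symmetrizations of products of functions in `𝓕_n`),
the element `X_p(f) = Σ_{α : {1,…,p+1} → {1,…,p}} f(u_{α₁},…,u_{α_{p+1}}) ψ_{α₁}⋯ψ_{α_{p+1}}`
vanishes identically if and only if `f` vanishes at every point where two of its arguments are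
congruent modulo `Γ`. -/
theorem stmt11 (ω₁ ω₂ : ℂ) (hΓ : LinearIndependent ℝ ![ω₁, ω₂])
    (n p : ℕ) (hp : 1 ≤ p)
    (N : ℕ) (c : Fin N → ℂ) (Ff : Fin N → Fin (p + 1) → ℂ → ℂ)
    (hFf : ∀ i j, MemFn ω₁ ω₂ n (Ff i j))
    (f : (Fin (p + 1) → ℂ) → ℂ)
    (hf : ∀ z : Fin (p + 1) → ℂ, (∀ j, z j ∉ lat ω₁ ω₂) →
      f z = ∑ i, c i * ((1 / (Nat.factorial (p + 1) : ℂ)) *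
        ∑ σ : Equiv.Perm (Fin (p + 1)), ∏ j, Ff i j (z (σ j)))) :
    (∀ u ψ : Fin p → ℂ, (∀ α, u α ∉ lat ω₁ ω₂) →
        (∀ α β, α ≠ β → u α - u β ∉ lat ω₁ ω₂) →
        ∑ a : Fin (p + 1) → Fin p, f (fun j => u (a j)) * ∏ j, ψ (a j) = 0)
    ↔ (∀ z : Fin (p + 1) → ℂ, (∀ j, z j ∉ lat ω₁ ω₂) →
        (∃ j k, j ≠ k ∧ z j - z k ∈ lat ω₁ ω₂) → f z = 0) :=
  stmt11_general ω₁ ω₂ n p N c Ff hFf f hf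
end
end

section
/- Let p ≥ 1 and let (f_{α,β})_{1≤α,β≤p+1} be a matrix of functions in 𝓕 which has rank 1 pointwise, i.e. f_{α,β}(z) f_{α′,β′}(z) = f_{α,β′}(z) f_{α′,β}(z) for all α, α′, β, β′ and all z ∉ Γ. Then for all z₁,…,z_{p+1} ∉ Γ such that z_j − z_k ∈ Γ for some j ≠ k, the determinant det( f_{α,β}(z_β) )_{1≤α,β≤p+1} equals 0. Consequently the symmetrized function (z₁,…,z_{p+1}) ↦ (1/(p+1)!) Σ_{σ ∈ S_{p+1}} det( f_{α,β}(z_{σ(β)}) ) vanishes on all divisors z_j − z_k ∈ Γ, i.e. det(f_{α,β}) ∈ ker x_p. -/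
noncomputable section

/-- `f ∈ 𝓕`: a meromorphic `Γ`-elliptic function, holomorphic on `ℂ ∖ Γ`. -/
def MemF (ω₁ ω₂ : ℂ) (f : ℂ → ℂ) : Prop :=
  (∀ z ∉ lat ω₁ ω₂, ∀ w ∈ lat ω₁ ω₂, f (z + w) = f z) ∧
  (∀ z ∉ lat ω₁ ω₂, DifferentiableAt ℂ f z) ∧
  (∀ γ ∈ lat ω₁ ω₂, ∃ (k : ℕ) (g : ℂ → ℂ), AnalyticAt ℂ g γ ∧
    ∀ᶠ z in nhdsWithin γ {γ}ᶜ, g z = (z - γ) ^ k * f z)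

/-!
Periodicity moves the argument of column `j` from `z_j` to `z_k`; there the rank-one condition
makes all `2 × 2` minors of columns `j` and `k` vanish, so the two columns are proportional and
the determinant is zero. Every term of the symmetrization is a determinant of the same kind.
-/

namespace Matrix

variable {n R K : Type*} [Fintype n] [DecidableEq n]

theorem det_eq_zero_of_col_eq_smul_col [CommRing R] (M : Matrix n n R) {j k : n} (hjk : j ≠ k)
    (c : R) (h : ∀ i, M i j = c * M i k) : M.det = 0 := by
  have hM : M = M.updateCol j (c • fun i => M i k) := by
    ext i l
    by_cases hl : l = j
    · subst hl
      simp [h i]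
    · simp [updateCol_ne hl]
  rw [hM, det_updateCol_smul, det_zero_of_column_eq hjk (by simp [updateCol_ne hjk.symm]),
    mul_zero]

theorem det_eq_zero_of_col_minors_eq_zero [Field K] (M : Matrix n n K) {j k : n} (hjk : j ≠ k)
    (h : ∀ i i', M i j * M i' k = M i k * M i' j) : M.det = 0 := by
  by_cases hk : ∀ i, M i k = 0
  · exact det_eq_zero_of_column_eq_zero k hk
  obtain ⟨i₀, hi₀⟩ := not_forall.mp hk
  refine M.det_eq_zero_of_col_eq_smul_col hjk (M i₀ j / M i₀ k) fun i => ?_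
  field_simp
  linear_combination h i i₀

end Matrix

theorem det_apply_eq_zero_of_sub_mem {G n K : Type*} [AddCommGroup G] [Fintype n]
    [DecidableEq n] [Field K] (Λ : Set G) (f : n → n → G → K)
    (hper : ∀ α β, ∀ z ∉ Λ, ∀ w ∈ Λ, f α β (z + w) = f α β z)
    (hrk : ∀ α α' β β', ∀ z ∉ Λ, f α β z * f α' β' z = f α β' z * f α' β z)
    (z : n → G) (hz : ∀ j, z j ∉ Λ) {j k : n} (hjk : j ≠ k) (hsub : z j - z k ∈ Λ) :
    (Matrix.of fun α β => f α β (z β)).det = 0 := by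
  have hshift : ∀ α, f α j (z j) = f α j (z k) := fun α => by
    simpa using hper α j (z k) (hz k) _ hsub
  refine Matrix.det_eq_zero_of_col_minors_eq_zero _ hjk fun α α' => ?_
  simp only [Matrix.of_apply, hshift]
  exact hrk α α' j k (z k) (hz k)

theorem stmt12_general (ω₁ ω₂ : ℂ)
    (p : ℕ)
    (f : Fin (p + 1) → Fin (p + 1) → ℂ → ℂ)
    (hmem : ∀ α β, MemF ω₁ ω₂ (f α β))
    (hrk : ∀ α α' β β', ∀ z ∉ lat ω₁ ω₂,
      f α β z * f α' β' z = f α β' z * f α' β z) :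
    ∀ z : Fin (p + 1) → ℂ, (∀ j, z j ∉ lat ω₁ ω₂) →
      (∃ j k, j ≠ k ∧ z j - z k ∈ lat ω₁ ω₂) →
      Matrix.det (Matrix.of fun α β => f α β (z β)) = 0 ∧
      (1 / (Nat.factorial (p + 1) : ℂ)) * ∑ σ : Equiv.Perm (Fin (p + 1)),
        Matrix.det (Matrix.of fun α β => f α β (z (σ β))) = 0 := by
  rintro z hz ⟨j, k, hjk, hsub⟩
  have hdet := det_apply_eq_zero_of_sub_mem _ f (fun α β => (hmem α β).1) hrk
  refine ⟨hdet z hz hjk hsub, ?_⟩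
  rw [Finset.sum_eq_zero fun (σ : Equiv.Perm _) _ => hdet (fun β => z (σ β)) (fun i => hz (σ i))
    (σ.symm.injective.ne hjk) (by simpa using hsub), mul_zero]

/-- If `(f_{α,β})` is a `(p+1)×(p+1)` matrix of functions in `𝓕` of pointwise rank 1, then
`det(f_{α,β}(z_β)) = 0` whenever two of the points `z₁,…,z_{p+1}` are congruent mod `Γ`;
consequently the symmetrized determinant vanishes on all divisors `z_j − z_k ∈ Γ`,
i.e. `det(f_{α,β}) ∈ ker x_p`. -/
theorem stmt12 (ω₁ ω₂ : ℂ) (hΓ : LinearIndependent ℝ ![ω₁, ω₂])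
    (p : ℕ) (hp : 1 ≤ p)
    (f : Fin (p + 1) → Fin (p + 1) → ℂ → ℂ)
    (hmem : ∀ α β, MemF ω₁ ω₂ (f α β))
    (hrk : ∀ α α' β β', ∀ z ∉ lat ω₁ ω₂,
      f α β z * f α' β' z = f α β' z * f α' β z) :
    ∀ z : Fin (p + 1) → ℂ, (∀ j, z j ∉ lat ω₁ ω₂) →
      (∃ j k, j ≠ k ∧ z j - z k ∈ lat ω₁ ω₂) →
      Matrix.det (Matrix.of fun α β => f α β (z β)) = 0 ∧
      (1 / (Nat.factorial (p + 1) : ℂ)) * ∑ σ : Equiv.Perm (Fin (p + 1)),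
        Matrix.det (Matrix.of fun α β => f α β (z (σ β))) = 0 :=
  stmt12_general ω₁ ω₂ p f hmem hrk
end
end
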